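/- If A is an abelian normal subgroup of a finite group G and exp(A) is even, then the exponent of the subgroup [A, G^φ] of χ(G) divides 2·exp(A). -/

import Mathlib

open scoped commutatorElement

def chiRels (G : Type*) [Group G] : Subgroup (Monoid.Coprod G G) :=
  Subgroup.normalClosure {x | ∃ g : G, x = ⁅(Monoid.Coprod.inl g : Monoid.Coprod G G), Monoid.Coprod.inr g⁆}

instance (G : Type*) [Group G] : (chiRels G).Normal :=
  Subgroup.normalClosure_normal

def chi (G : Type*) [Group G] := Monoid.Coprod G G ⧸ chiRels G

instance (G : Type*) [Group G] : Group (chi G) :=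
  QuotientGroup.Quotient.group _

/-- The canonical map `G →* χ(G)`. -/
def chiL (G : Type*) [Group G] : G →* chi G :=
  (QuotientGroup.mk' (chiRels G)).comp Monoid.Coprod.inl

/-- The canonical map `G^φ →* χ(G)`, `g ↦ g^φ`. -/
def chiR (G : Type*) [Group G] : G →* chi G :=
  (QuotientGroup.mk' (chiRels G)).comp Monoid.Coprod.inr

/-- `D(G) = [G, G^φ] ≤ χ(G)`. -/
def chiD (G : Type*) [Group G] : Subgroup (chi G) :=
  ⁅(chiL G).range, (chiR G).range⁆

/-!
Write `l, r : G →* χ(G)` for the two copies of `G`, `C x y = ⁅l x, r y⁆` and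
`δ g = (l g)⁻¹ * r g`. Expanding `⁅l (u * v), r (u * v)⁆ = 1` gives Sidki's identities
`C y x = (C x y)⁻¹` and `⁅δ u, C v w⁆ = 1`, so `D = [G, G^φ]` is normal and its centralizer
`K` contains every `δ g`. Hence `l ≡ r` and `C x y ≡ l ⁅x, y⁆` modulo `K`, so modulo `K` the
group `T = [A, G^φ]` is an image of the abelian group `A`. Thus `⁅T, T⁆ ≤ K`, which centralizes
`T ≤ D`, and `x ^ e ∈ K` for `x ∈ T` (`e = exp A`), whence `⁅x, y⁆ ^ e = ⁅x ^ e, y⁆ = 1`. In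
this group of class at most two, `(x * y) ^ 2e = ⁅y, x⁆ ^ (e (2e - 1)) * x ^ 2e * y ^ 2e`
reduces the claim to the generators `C a g`, `a ∈ A`. Conjugation by `l a` multiplies `C a g`
by `z = r g * C a (g⁻¹ a g) * (r g)⁻¹ ∈ K`, and `z ^ e = 1`. So
`1 = ⁅l a ^ e, r g⁆ = (C a g) ^ e * z ^ (e choose 2)`, and `(C a g) ^ 2e = z ^ (-e (e - 1)) = 1`.
-/

section
variable {H : Type*} [Group H]

theorem MulAut.conj_apply_eq_self_iff {u x : H} : MulAut.conj u x = x ↔ Commute u x := by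
  rw [MulAut.conj_apply, mul_inv_eq_iff_eq_mul]; rfl

theorem MulAut.conj_conj_apply (u v x : H) :
    MulAut.conj u (MulAut.conj v x) = MulAut.conj (u * v) x := by
  rw [map_mul, MulAut.mul_apply]

theorem commutatorElement_mul_left_eq_conj (a b c : H) :
    ⁅a * b, c⁆ = MulAut.conj a ⁅b, c⁆ * ⁅a, c⁆ := by
  rw [commutatorElement_mul_left_eq_conj_mul, MulAut.conj_apply]

theorem commutatorElement_mul_right_eq_conj (a b c : H) :
    ⁅a, b * c⁆ = ⁅a, b⁆ * MulAut.conj b ⁅a, c⁆ := by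
  rw [commutatorElement_mul_right_eq_mul_conj, MulAut.conj_apply]; group

theorem commutatorElement_pow_left_of_conj {x y z : H}
    (hconj : MulAut.conj x ⁅x, y⁆ = ⁅x, y⁆ * z) (hzx : Commute z x) (hzw : Commute z ⁅x, y⁆)
    (n : ℕ) :
    ⁅x ^ n, y⁆ = ⁅x, y⁆ ^ n * z ^ n.choose 2 := by
  induction n with
  | zero => simp
  | succ n ih =>
    rw [pow_succ', commutatorElement_mul_left_eq_conj, ih, map_mul, map_pow, map_pow, hconj,
      MulAut.conj_apply_eq_self_iff.mpr hzx.symm, hzw.symm.mul_pow, Nat.choose_succ_succ',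
      Nat.choose_one_right]
    simp only [mul_assoc]
    rw [← mul_assoc (z ^ n), ← pow_add, (hzw.pow_left _).eq, ← mul_assoc, ← pow_succ]

theorem commutatorElement_pow_left_of_commute {x y : H} (h : Commute x ⁅x, y⁆) (n : ℕ) :
    ⁅x ^ n, y⁆ = ⁅x, y⁆ ^ n := by
  simpa using commutatorElement_pow_left_of_conj (z := 1)
    (by rw [MulAut.conj_apply_eq_self_iff.mpr h, mul_one]) (.one_left x) (.one_left _) n

theorem mul_pow_eq_commutatorElement_pow_mul {x y : H} (hx : Commute ⁅y, x⁆ x)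
    (hy : Commute ⁅y, x⁆ y) (n : ℕ) : (x * y) ^ n = ⁅y, x⁆ ^ n.choose 2 * (x ^ n * y ^ n) := by
  induction n with
  | zero => simp
  | succ n ih =>
    have hshift : y ^ n * x = ⁅y, x⁆ ^ n * (x * y ^ n) := by
      rw [← commutatorElement_pow_left_of_commute hy.symm, commutatorElement_def]; group
    calc (x * y) ^ (n + 1) = ⁅y, x⁆ ^ n.choose 2 * (x ^ n * (y ^ n * x) * y) := by
          rw [pow_succ, ih]; group
      _ = _ := by
        rw [hshift, ← mul_assoc (x ^ n), ← (hx.pow_pow n n).eq, Nat.choose_succ_succ',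
          Nat.choose_one_right]
        group

theorem mul_pow_two_mul_eq_one {x y : H} {e : ℕ} (hx : Commute ⁅y, x⁆ x) (hy : Commute ⁅y, x⁆ y)
    (he : ⁅y, x⁆ ^ e = 1) (hxe : x ^ (2 * e) = 1) (hye : y ^ (2 * e) = 1) :
    (x * y) ^ (2 * e) = 1 := by
  obtain ⟨k, hk⟩ : e ∣ (2 * e).choose 2 :=
    ⟨2 * e - 1, by rw [Nat.choose_two_right, mul_assoc, Nat.mul_div_cancel_left _ two_pos]⟩
  rw [mul_pow_eq_commutatorElement_pow_mul hx hy, hxe, hye, hk, pow_mul, he, one_pow, mul_one,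
    mul_one]

end

section Chi
variable {G : Type*} [Group G]

theorem chiL_commute_chiR (g : G) : Commute (chiL G g) (chiR G g) := by
  have h : QuotientGroup.mk' (chiRels G) ⁅Monoid.Coprod.inl g, Monoid.Coprod.inr g⁆ = 1 :=
    (QuotientGroup.eq_one_iff _).mpr (Subgroup.subset_normalClosure ⟨g, rfl⟩)
  rw [map_commutatorElement] at h
  exact commutatorElement_eq_one_iff_commute.mp h

@[elab_as_elim]
theorem chi.induction_on {motive : chi G → Prop} (x : chi G) (inl : ∀ g, motive (chiL G g))
    (inr : ∀ g, motive (chiR G g)) (mul : ∀ x y, motive x → motive y → motive (x * y)) :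
    motive x := by
  obtain ⟨w, rfl⟩ := QuotientGroup.mk'_surjective (chiRels G) x
  induction w using Monoid.Coprod.induction_on with
  | inl g => exact inl g
  | inr g => exact inr g
  | mul x y hx hy => rw [map_mul]; exact mul _ _ hx hy

def chiComm (x y : G) : chi G := ⁅chiL G x, chiR G y⁆

def chiDelta (g : G) : chi G := (chiL G g)⁻¹ * chiR G g

theorem chiL_mul_chiDelta (g : G) : chiL G g * chiDelta g = chiR G g :=
  mul_inv_cancel_left _ _

theorem chiComm_self (x : G) : chiComm x x = 1 :=
  commutatorElement_eq_one_iff_commute.mpr (chiL_commute_chiR x)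

theorem chiComm_mul_left (x y z : G) :
    chiComm (x * y) z = MulAut.conj (chiL G x) (chiComm y z) * chiComm x z := by
  rw [chiComm, map_mul, commutatorElement_mul_left_eq_conj]; rfl

theorem chiComm_mul_right (x y z : G) :
    chiComm x (y * z) = chiComm x y * MulAut.conj (chiR G y) (chiComm x z) := by
  rw [chiComm, map_mul, commutatorElement_mul_right_eq_conj]; rfl

theorem chiComm_mem_chiD (x y : G) : chiComm x y ∈ chiD G :=
  Subgroup.commutator_mem_commutator ⟨x, rfl⟩ ⟨y, rfl⟩

theorem conj_chiDelta_chiComm (u v : G) :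
    MulAut.conj (chiDelta u) (chiComm u v) = (chiComm v u)⁻¹ := by
  have h := chiComm_self (u * v)
  rw [chiComm_mul_right, chiComm_mul_left, chiComm_mul_left] at h
  simp only [chiComm_self, map_one, mul_one, one_mul] at h
  rw [chiDelta, ← MulAut.conj_conj_apply, eq_inv_of_mul_eq_one_right h, map_inv, map_inv,
    MulAut.inv_apply_self]

theorem chiDelta_commute_chiComm_same (u w : G) : Commute (chiDelta u) (chiComm u w) := by
  have hδr : Commute (chiDelta u) (chiR G u) :=
    (chiL_commute_chiR u).inv_left.mul_left (Commute.refl _)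
  have key : MulAut.conj (chiR G u) (MulAut.conj (chiDelta u) (chiComm u w)) =
      MulAut.conj (chiR G u) (chiComm u w) :=
    calc _ = MulAut.conj (chiDelta u) (chiComm u (u * w)) := by
          rw [chiComm_mul_right, chiComm_self, one_mul, MulAut.conj_conj_apply,
            MulAut.conj_conj_apply, hδr.eq]
      _ = MulAut.conj (chiL G u) (MulAut.conj (chiDelta u) (chiComm u w)) := by
          rw [conj_chiDelta_chiComm, conj_chiDelta_chiComm, chiComm_mul_left, chiComm_self,
            mul_one, map_inv]
      _ = _ := by rw [MulAut.conj_conj_apply, chiL_mul_chiDelta]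
  exact MulAut.conj_apply_eq_self_iff.mp (MulEquiv.injective _ key)

theorem chiComm_swap (x y : G) : chiComm y x = (chiComm x y)⁻¹ := by
  rw [← conj_chiDelta_chiComm y x,
    MulAut.conj_apply_eq_self_iff.mpr (chiDelta_commute_chiComm_same y x)]

theorem chiDelta_commute_chiComm (u v w : G) : Commute (chiDelta u) (chiComm v w) := by
  have h := chiComm_swap w (u * v)
  rw [chiComm_mul_left, chiComm_mul_right, mul_inv_rev, ← map_inv, ← chiComm_swap,
    ← chiComm_swap] at h
  rw [← MulAut.conj_apply_eq_self_iff, chiDelta, ← MulAut.conj_conj_apply, ← mul_right_cancel h,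
    map_inv, MulAut.inv_apply_self]

theorem chiDelta_mem_centralizer_chiD (u : G) :
    chiDelta u ∈ Subgroup.centralizer (chiD G : Set (chi G)) := by
  have : chiD G ≤ Subgroup.centralizer {chiDelta u} := by
    refine Subgroup.commutator_le.mpr ?_
    rintro _ ⟨v, rfl⟩ _ ⟨w, rfl⟩
    exact Subgroup.mem_centralizer_singleton_iff.mpr (chiDelta_commute_chiComm u v w).eq.symm
  exact fun d hd => Subgroup.mem_centralizer_singleton_iff.mp (this hd)

theorem conj_chiL_eq_conj_chiR_of_mem_chiD {d : chi G} (hd : d ∈ chiD G) (u : G) :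
    MulAut.conj (chiL G u) d = MulAut.conj (chiR G u) d := by
  rw [← chiL_mul_chiDelta, ← MulAut.conj_conj_apply, MulAut.conj_apply_eq_self_iff.mpr
    (Subgroup.mem_centralizer_iff.mp (chiDelta_mem_centralizer_chiD u) d hd).symm]

theorem conj_chiL_mem_chiD (g : G) {d : chi G} (hd : d ∈ chiD G) :
    MulAut.conj (chiL G g) d ∈ chiD G := by
  have : chiD G ≤ (chiD G).comap (MulAut.conj (chiL G g)).toMonoidHom := by
    refine Subgroup.commutator_le.mpr ?_
    rintro _ ⟨x, rfl⟩ _ ⟨y, rfl⟩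
    change MulAut.conj (chiL G g) (chiComm x y) ∈ chiD G
    rw [eq_mul_inv_of_mul_eq (chiComm_mul_left g x y).symm]
    exact mul_mem (chiComm_mem_chiD _ _) (inv_mem (chiComm_mem_chiD _ _))
  exact this hd

instance chiD_normal : (chiD G).Normal := by
  refine ⟨fun d hd u => ?_⟩
  rw [← MulAut.conj_apply]
  induction u using chi.induction_on generalizing d with
  | inl g => exact conj_chiL_mem_chiD g hd
  | inr g => exact conj_chiL_eq_conj_chiR_of_mem_chiD hd g ▸ conj_chiL_mem_chiD g hd
  | mul u v hu hv => rw [← MulAut.conj_conj_apply]; exact hu _ (hv _ hd)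

theorem mk'_chiR (g : G) :
    QuotientGroup.mk' (Subgroup.centralizer (chiD G : Set (chi G))) (chiR G g) =
      QuotientGroup.mk' _ (chiL G g) :=
  (QuotientGroup.eq.mpr (chiDelta_mem_centralizer_chiD g)).symm

theorem mk'_chiComm (x y : G) :
    QuotientGroup.mk' (Subgroup.centralizer (chiD G : Set (chi G))) (chiComm x y) =
      QuotientGroup.mk' _ (chiL G ⁅x, y⁆) := by
  rw [chiComm, map_commutatorElement, mk'_chiR, map_commutatorElement, map_commutatorElement]

theorem chiL_commute_chiComm_of_commute {p q : G} (h : Commute p q) :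
    Commute (chiL G q) (chiComm p q) := by
  have h1 := chiComm_mul_left p q q
  rw [chiComm_self, map_one, one_mul, h.eq, chiComm_mul_left, chiComm_self, mul_one] at h1
  exact MulAut.conj_apply_eq_self_iff.mp h1

theorem chiComm_pow_right_of_commute {p q : G} (h : Commute p q) (n : ℕ) :
    chiComm p (q ^ n) = chiComm p q ^ n := by
  have hq : Commute (chiL G q) ⁅chiL G q, chiR G p⁆ := by
    change Commute _ (chiComm q p)
    rw [chiComm_swap p q]
    exact (chiL_commute_chiComm_of_commute h).inv_right
  rw [chiComm_swap (q ^ n) p, chiComm, map_pow, commutatorElement_pow_left_of_commute hq,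
    ← chiComm, chiComm_swap p q, inv_pow, inv_inv]

theorem conj_chiL_chiComm (a g : G) :
    MulAut.conj (chiL G a) (chiComm a g) =
      chiComm a g * MulAut.conj (chiR G g) (chiComm a (g⁻¹ * a * g)) := by
  have ha : chiComm a a⁻¹ = 1 := by
    rw [chiComm, map_inv]
    exact commutatorElement_eq_one_iff_commute.mpr (chiL_commute_chiR a).inv_right
  rw [conj_chiL_eq_conj_chiR_of_mem_chiD (chiComm_mem_chiD a g), chiComm, map_commutatorElement,
    MulAut.conj_apply_eq_self_iff.mpr (chiL_commute_chiR a).symm, MulAut.conj_apply, ← map_inv,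
    ← map_mul, ← map_mul, ← chiComm, show a * g * a⁻¹ = g * (g⁻¹ * a * g) * a⁻¹ by group,
    chiComm_mul_right, ha, map_one, mul_one, chiComm_mul_right]
  rfl

theorem chiL_commute_conj_chiR_chiComm {a g : G} (h : Commute a (g⁻¹ * a * g)) :
    Commute (chiL G a) (MulAut.conj (chiR G g) (chiComm a (g⁻¹ * a * g))) := by
  rw [← conj_chiL_eq_conj_chiR_of_mem_chiD (chiComm_mem_chiD _ _),
    ← MulAut.conj_apply_eq_self_iff, MulAut.conj_conj_apply, ← map_mul,
    show a * g = g * (g⁻¹ * a * g) by group, map_mul, ← MulAut.conj_conj_apply,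
    MulAut.conj_apply_eq_self_iff.mpr (chiL_commute_chiComm_of_commute h)]

theorem commutator_map_chiL_le_chiD (A : Subgroup G) :
    ⁅A.map (chiL G), (chiR G).range⁆ ≤ chiD G :=
  Subgroup.commutator_mono (Subgroup.map_le_range _ _) le_rfl

section Commutator

variable {A : Subgroup G} [A.Normal]

theorem exists_mk'_eq_mk'_chiL_of_mem_commutator {t : chi G}
    (ht : t ∈ ⁅A.map (chiL G), (chiR G).range⁆) :
    ∃ a ∈ A, QuotientGroup.mk' (Subgroup.centralizer (chiD G : Set (chi G))) t =
      QuotientGroup.mk' _ (chiL G a) := by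
  have : ⁅A.map (chiL G), (chiR G).range⁆ ≤
      (A.map ((QuotientGroup.mk' _).comp (chiL G))).comap
        (QuotientGroup.mk' (Subgroup.centralizer (chiD G : Set (chi G)))) := by
    refine Subgroup.commutator_le.mpr ?_
    rintro _ ⟨a, ha, rfl⟩ _ ⟨g, rfl⟩
    refine ⟨⁅a, g⁆, ?_, (mk'_chiComm a g).symm⟩
    exact Subgroup.commutator_le_left A ⊤ (Subgroup.commutator_mem_commutator ha trivial)
  obtain ⟨a, ha, hat⟩ := this ht
  exact ⟨a, ha, hat.symm⟩

theorem commutatorElement_mem_centralizer_chiD (hAab : ∀ a ∈ A, ∀ b ∈ A, a * b = b * a)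
    {x y : chi G} (hx : x ∈ ⁅A.map (chiL G), (chiR G).range⁆)
    (hy : y ∈ ⁅A.map (chiL G), (chiR G).range⁆) :
    ⁅x, y⁆ ∈ Subgroup.centralizer (chiD G : Set (chi G)) := by
  obtain ⟨a, ha, hxa⟩ := exists_mk'_eq_mk'_chiL_of_mem_commutator hx
  obtain ⟨b, hb, hyb⟩ := exists_mk'_eq_mk'_chiL_of_mem_commutator hy
  rw [← QuotientGroup.ker_mk' (Subgroup.centralizer _), MonoidHom.mem_ker,
    map_commutatorElement, hxa, hyb, ← map_commutatorElement, ← map_commutatorElement,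
    commutatorElement_eq_one_iff_mul_comm.mpr (hAab a ha b hb), map_one, map_one]

theorem pow_mem_centralizer_chiD {e : ℕ} (hApow : ∀ a ∈ A, a ^ e = 1) {x : chi G}
    (hx : x ∈ ⁅A.map (chiL G), (chiR G).range⁆) :
    x ^ e ∈ Subgroup.centralizer (chiD G : Set (chi G)) := by
  obtain ⟨a, ha, hxa⟩ := exists_mk'_eq_mk'_chiL_of_mem_commutator hx
  rw [← QuotientGroup.ker_mk' (Subgroup.centralizer _), MonoidHom.mem_ker, map_pow, hxa,
    ← map_pow, ← map_pow, hApow a ha, map_one, map_one]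

theorem commutatorElement_pow_eq_one_of_mem_commutator
    (hAab : ∀ a ∈ A, ∀ b ∈ A, a * b = b * a) {e : ℕ} (hApow : ∀ a ∈ A, a ^ e = 1) {x y : chi G}
    (hx : x ∈ ⁅A.map (chiL G), (chiR G).range⁆) (hy : y ∈ ⁅A.map (chiL G), (chiR G).range⁆) :
    ⁅x, y⁆ ^ e = 1 := by
  have hxc : Commute x ⁅x, y⁆ := Subgroup.mem_centralizer_iff.mp
    (commutatorElement_mem_centralizer_chiD hAab hx hy) x (commutator_map_chiL_le_chiD A hx)
  rw [← commutatorElement_pow_left_of_commute hxc, commutatorElement_eq_one_iff_commute]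
  exact (Subgroup.mem_centralizer_iff.mp (pow_mem_centralizer_chiD hApow hx) y
    (commutator_map_chiL_le_chiD A hy)).symm

theorem chiComm_pow_two_mul_eq_one (hAab : ∀ a ∈ A, ∀ b ∈ A, a * b = b * a) {e : ℕ}
    (hApow : ∀ a ∈ A, a ^ e = 1) {a : G} (ha : a ∈ A) (g : G) :
    chiComm a g ^ (2 * e) = 1 := by
  have hy : g⁻¹ * a * g ∈ A := by simpa using ‹A.Normal›.conj_mem a ha g⁻¹
  have hay : Commute a (g⁻¹ * a * g) := hAab a ha _ hy
  set z := MulAut.conj (chiR G g) (chiComm a (g⁻¹ * a * g)) with hz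
  have hzK : z ∈ Subgroup.centralizer (chiD G : Set (chi G)) := by
    rw [hz, MulAut.conj_apply]
    refine (Subgroup.normal_centralizer (H := chiD G)).conj_mem _ ?_ (chiR G g)
    rw [← QuotientGroup.ker_mk' (Subgroup.centralizer _), MonoidHom.mem_ker, mk'_chiComm,
      commutatorElement_eq_one_iff_commute.mpr hay, map_one, map_one]
  have hzw : Commute z (chiComm a g) :=
    (Subgroup.mem_centralizer_iff.mp hzK _ (chiComm_mem_chiD a g)).symm
  have hze : z ^ e = 1 := by
    rw [← map_pow, ← chiComm_pow_right_of_commute hay, hApow _ hy, chiComm, map_one,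
      commutatorElement_one_right, map_one]
  have hwe : chiComm a g ^ e * z ^ e.choose 2 = 1 := by
    have := commutatorElement_pow_left_of_conj (x := chiL G a) (y := chiR G g)
      (conj_chiL_chiComm a g) (chiL_commute_conj_chiR_chiComm hay).symm hzw e
    rw [← map_pow, hApow a ha, map_one, commutatorElement_one_left] at this
    exact this.symm
  obtain ⟨k, hk⟩ : e ∣ 2 * e.choose 2 :=
    ⟨e - 1, by
      rw [Nat.choose_two_right, Nat.mul_div_cancel' (Nat.even_mul_pred_self e).two_dvd]⟩
  rw [mul_comm, pow_mul, eq_inv_of_mul_eq_one_left hwe, inv_pow, ← pow_mul, mul_comm, hk,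
    pow_mul, hze, one_pow, inv_one]

theorem pow_two_mul_eq_one_of_mem_commutator (hAab : ∀ a ∈ A, ∀ b ∈ A, a * b = b * a) {e : ℕ}
    (hApow : ∀ a ∈ A, a ^ e = 1) {t : chi G} (ht : t ∈ ⁅A.map (chiL G), (chiR G).range⁆) :
    t ^ (2 * e) = 1 := by
  rw [Subgroup.commutator_def] at ht
  induction ht using Subgroup.closure_induction with
  | mem _ hw =>
    obtain ⟨_, ⟨a, ha, rfl⟩, _, ⟨g, rfl⟩, rfl⟩ := hw
    exact chiComm_pow_two_mul_eq_one hAab hApow ha g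
  | one => exact one_pow _
  | mul x y hx hy hxe hye =>
    rw [← Subgroup.commutator_def] at hx hy
    have hyx := commutatorElement_mem_centralizer_chiD hAab hy hx
    exact mul_pow_two_mul_eq_one
      (Subgroup.mem_centralizer_iff.mp hyx x (commutator_map_chiL_le_chiD A hx)).symm
      (Subgroup.mem_centralizer_iff.mp hyx y (commutator_map_chiL_le_chiD A hy)).symm
      (commutatorElement_pow_eq_one_of_mem_commutator hAab hApow hy hx) hxe hye
  | inv x _ hxe => rw [inv_pow, hxe, inv_one]

end Commutator

end Chi

theorem stmt_9_general {G : Type*} [Group G] (A : Subgroup G)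
    (hA : A.Normal) (hAab : ∀ a ∈ A, ∀ b ∈ A, a * b = b * a) :
    Monoid.exponent ↥(⁅A.map (chiL G), (chiR G).range⁆ : Subgroup (chi G)) ∣
      2 * Monoid.exponent A := by
  have := hA
  have hApow : ∀ a ∈ A, a ^ Monoid.exponent A = 1 := fun a ha => by
    simpa using congrArg Subtype.val (Monoid.pow_exponent_eq_one (⟨a, ha⟩ : A))
  refine Monoid.exponent_dvd_of_forall_pow_eq_one fun t => Subtype.ext ?_
  simpa using pow_two_mul_eq_one_of_mem_commutator hAab hApow t.2

/-- If A is an abelian normal subgroup of a finite group G with exp(A) even,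
then exp([A, G^φ]) divides 2·exp(A). -/
theorem stmt_9 {G : Type*} [Group G] [Finite G] (A : Subgroup G)
    (hA : A.Normal) (hAab : ∀ a ∈ A, ∀ b ∈ A, a * b = b * a)
    (heven : Even (Monoid.exponent A)) :
    Monoid.exponent ↥(⁅A.map (chiL G), (chiR G).range⁆ : Subgroup (chi G)) ∣
      2 * Monoid.exponent A :=
  stmt_9_general A hA hAab
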